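/- Let V be a variety with 0⃗ and 1⃗ having Boolean factor congruences (BFC), A ∈ V, e⃗, f⃗ ∈ Z(A) and a⃗ ∈ Aⁿ. Then a⃗ = e⃗ ∧ f⃗ (the infimum in the center) if and only if [0⃗,a⃗] ∈ θ_{0,e} and [a⃗,f⃗] ∈ θ_{1,e}. -/
import Mathlib


open FirstOrder FirstOrder.Language FirstOrder.Language.Structure

universe u v w

namespace Paper

variable {L : FirstOrder.Language.{0, 0}}

/-- A congruence on an `L`-algebra: an equivalence relation compatible with all operations. -/
structure AlgCon (L : FirstOrder.Language.{0, 0}) (A : Type u) [L.Structure A] where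
  r : A → A → Prop
  refl : ∀ a, r a a
  symm : ∀ {a b}, r a b → r b a
  trans : ∀ {a b c}, r a b → r b c → r a c
  compat : ∀ {m : ℕ} (f : L.Functions m) (x y : Fin m → A),
    (∀ i, r (x i) (y i)) → r (funMap f x) (funMap f y)

namespace AlgCon

variable {A : Type u} [L.Structure A]

theorem ext' {c d : AlgCon L A} (h : ∀ a b, c.r a b ↔ d.r a b) : c = d := by
  cases c; cases d
  simp only [AlgCon.mk.injEq]
  funext a b
  exact propext (h a b)

/-- The identity (diagonal) congruence Δ. -/
def delta (L : FirstOrder.Language.{0, 0}) (A : Type u) [L.Structure A] : AlgCon L A where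
  r := Eq
  refl := fun _ => rfl
  symm := fun h => h.symm
  trans := fun h1 h2 => h1.trans h2
  compat := fun f x y h => by rw [funext h]

/-- The universal congruence ∇. -/
def nabla (L : FirstOrder.Language.{0, 0}) (A : Type u) [L.Structure A] : AlgCon L A where
  r := fun _ _ => True
  refl := fun _ => trivial
  symm := fun _ => trivial
  trans := fun _ _ => trivial
  compat := fun _ _ _ _ => trivial

/-- Meet (intersection) of congruences. -/
def inf (c d : AlgCon L A) : AlgCon L A where
  r := fun a b => c.r a b ∧ d.r a b
  refl := fun a => ⟨c.refl a, d.refl a⟩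
  symm := fun h => ⟨c.symm h.1, d.symm h.2⟩
  trans := fun h1 h2 => ⟨c.trans h1.1 h2.1, d.trans h1.2 h2.2⟩
  compat := fun f x y h =>
    ⟨c.compat f x y fun i => (h i).1, d.compat f x y fun i => (h i).2⟩

/-- Relational composition of congruences (as a binary relation). -/
def comp (c d : AlgCon L A) (a b : A) : Prop := ∃ z, c.r a z ∧ d.r z b

/-- The congruence generated by a binary relation. -/
def conGen (L : FirstOrder.Language.{0, 0}) {A : Type u} [L.Structure A]
    (R : A → A → Prop) : AlgCon L A where
  r := fun a b => ∀ c : AlgCon L A, (∀ x y, R x y → c.r x y) → c.r a b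
  refl := fun a _ _ => AlgCon.refl _ a
  symm := fun h c hc => c.symm (h c hc)
  trans := fun h1 h2 c hc => c.trans (h1 c hc) (h2 c hc)
  compat := fun f x y h c hc => c.compat f x y fun i => h i c hc

/-- Join of congruences in the congruence lattice. -/
def sup (c d : AlgCon L A) : AlgCon L A :=
  conGen L (fun a b => c.r a b ∨ d.r a b)

end AlgCon

/-- The principal congruence θ(a⃗, b⃗) generated by the pairs (aᵢ, bᵢ). -/
def thetaPairs {A : Type u} [L.Structure A] {n : ℕ} (a b : Fin n → A) : AlgCon L A :=
  AlgCon.conGen L (fun x y => ∃ i, x = a i ∧ y = b i)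

/-- The congruence θ(S) generated by S × S. -/
def thetaSet {A : Type u} [L.Structure A] (S : Set A) : AlgCon L A :=
  AlgCon.conGen L (fun x y => x ∈ S ∧ y ∈ S)

/-- `[a⃗, b⃗] ∈ θ`: all pairs (aᵢ, bᵢ) belong to the congruence θ. -/
def inCon {A : Type u} [L.Structure A] {n : ℕ} (θ : AlgCon L A) (a b : Fin n → A) : Prop :=
  ∀ i, θ.r (a i) (b i)

/-- θ and δ are complementary factor congruences: θ ∩ δ = Δ and θ ∘ δ = ∇. -/
def IsComplFC {A : Type u} [L.Structure A] (θ δ : AlgCon L A) : Prop :=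
  θ.inf δ = AlgCon.delta L A ∧ ∀ a b : A, θ.comp δ a b

/-- The set of factor congruences of `A`. -/
def FC (L : FirstOrder.Language.{0, 0}) (A : Type u) [L.Structure A] : Set (AlgCon L A) :=
  {θ | ∃ δ, IsComplFC θ δ}

/-- `S` is a Boolean sublattice of the congruence lattice of `A`: it contains Δ and ∇,
is closed under meet and join, is distributive, and every element has a complement in `S`. -/
def IsBooleanSublattice {A : Type u} [L.Structure A] (S : Set (AlgCon L A)) : Prop :=
  AlgCon.delta L A ∈ S ∧ AlgCon.nabla L A ∈ S ∧
  (∀ θ ∈ S, ∀ δ ∈ S, θ.inf δ ∈ S) ∧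
  (∀ θ ∈ S, ∀ δ ∈ S, θ.sup δ ∈ S) ∧
  (∀ θ ∈ S, ∀ δ ∈ S, ∀ γ ∈ S, θ.inf (δ.sup γ) = (θ.inf δ).sup (θ.inf γ)) ∧
  (∀ θ ∈ S, ∃ δ ∈ S, θ.inf δ = AlgCon.delta L A ∧ θ.sup δ = AlgCon.nabla L A)

/-- An identity (equation between two terms in finitely many variables). -/
structure Identity (L : FirstOrder.Language.{0, 0}) where
  nvars : ℕ
  lhs : L.Term (Fin nvars)
  rhs : L.Term (Fin nvars)

/-- An identity holds in an algebra. -/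
def Identity.Holds (e : Identity L) (A : Type u) [L.Structure A] : Prop :=
  ∀ v : Fin e.nvars → A, e.lhs.realize v = e.rhs.realize v

/-- Membership of an algebra in the variety axiomatized by the set of identities `E`. -/
def InVariety (E : Set (Identity L)) (A : Type u) [L.Structure A] : Prop :=
  ∀ e ∈ E, e.Holds A

/-- The data of the closed terms 0₁, …, 0ₙ and 1₁, …, 1ₙ. -/
structure ZeroOneData (L : FirstOrder.Language.{0, 0}) where
  n : ℕ
  npos : 0 < n
  zero : Fin n → L.Term Empty
  one : Fin n → L.Term Empty

/-- The interpretation of the tuple 0⃗ in an algebra. -/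
def ZeroOneData.zeroA (Z : ZeroOneData L) (A : Type u) [L.Structure A] : Fin Z.n → A :=
  fun i => (Z.zero i).realize Empty.elim

/-- The interpretation of the tuple 1⃗ in an algebra. -/
def ZeroOneData.oneA (Z : ZeroOneData L) (A : Type u) [L.Structure A] : Fin Z.n → A :=
  fun i => (Z.one i).realize Empty.elim

/-- `V ⊨ (0⃗ ≈ 1⃗) → x ≈ y`: `V` is a variety with 0⃗ and 1⃗. -/
def ZeroOneData.Separates (Z : ZeroOneData L) (E : Set (Identity L)) : Prop :=
  ∀ (A : Type u) [L.Structure A], InVariety E A →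
    (∀ i, Z.zeroA A i = Z.oneA A i) → Subsingleton A

/-- Product structure on `A × B`. -/
instance prodStructure (A : Type u) (B : Type u) [L.Structure A] [L.Structure B] :
    L.Structure (A × B) where
  funMap := fun f x => (funMap f (fun i => (x i).1), funMap f (fun i => (x i).2))
  RelMap := fun r x => RelMap r (fun i => (x i).1) ∧ RelMap r (fun i => (x i).2)

/-- A witness that `e⃗` is a central element of `A`: an isomorphism
`τ : A ≅ A₁ × A₂` with `A₁, A₂ ∈ V` and `τ(e⃗) = [0⃗, 1⃗]`. -/
structure CentralWitness (E : Set (Identity L)) (Z : ZeroOneData L)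
    (A : Type u) [L.Structure A] (e : Fin Z.n → A) : Type (u + 1) where
  A₁ : Type u
  A₂ : Type u
  [s₁ : L.Structure A₁]
  [s₂ : L.Structure A₂]
  mem₁ : InVariety E A₁
  mem₂ : InVariety E A₂
  iso : A ≃[L] (A₁ × A₂)
  he : ∀ i, iso (e i) = (Z.zeroA A₁ i, Z.oneA A₂ i)

/-- A witness that `e⃗` and `f⃗` are complementary central elements of `A`. -/
structure ComplCentralWitness (E : Set (Identity L)) (Z : ZeroOneData L)
    (A : Type u) [L.Structure A] (e f : Fin Z.n → A) extends
    CentralWitness E Z A e : Type (u + 1) where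
  hf : ∀ i, iso (f i) = (Z.oneA A₁ i, Z.zeroA A₂ i)

/-- `e⃗` is a central element of `A`. -/
def IsCentral (E : Set (Identity L)) (Z : ZeroOneData L)
    (A : Type u) [L.Structure A] (e : Fin Z.n → A) : Prop :=
  Nonempty (CentralWitness E Z A e)

/-- `e⃗ ⋄_A f⃗`: `e⃗` and `f⃗` are complementary central elements of `A`. -/
def CentDiamond (E : Set (Identity L)) (Z : ZeroOneData L)
    (A : Type u) [L.Structure A] (e f : Fin Z.n → A) : Prop :=
  Nonempty (ComplCentralWitness E Z A e f)

/-- `V` has Boolean factor congruences: for every `A ∈ V`, `FC(A)` is a Boolean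
sublattice of `Con(A)`. -/
def HasBFC (E : Set (Identity L)) : Prop :=
  ∀ (A : Type u) [L.Structure A], InVariety E A → IsBooleanSublattice (FC L A)

/-- `V` is stable by complements: every homomorphism between members of `V`
preserves complementary central elements. -/
def StableByComplements (E : Set (Identity L)) (Z : ZeroOneData L) : Prop :=
  ∀ (A B : Type u) [L.Structure A] [L.Structure B], InVariety E A → InVariety E B →
    ∀ (f : A →[L] B) (e g : Fin Z.n → A), CentDiamond E Z A e g →
      CentDiamond E Z B (fun i => f (e i)) (fun i => f (g i))

/-- A formula is existential: of the form ∃w⃗ ψ with ψ quantifier-free. -/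
def IsExistentialForm {α : Type*} (φ : L.Formula α) : Prop :=
  ∃ (m : ℕ) (ψ : L.BoundedFormula α m), ψ.IsQF ∧ φ = ψ.exs

/-- The formula λ(z⃗, x, y) satisfies the condition (R): for all `A, B ∈ V`,
`A × B ⊨ λ([0⃗,1⃗], (a,c), (b,d))` iff `c = d`. -/
def RightFormulaWorks (E : Set (Identity L)) (Z : ZeroOneData L)
    (φ : L.Formula ((Fin Z.n) ⊕ (Fin 2))) : Prop :=
  ∀ (A B : Type u) [L.Structure A] [L.Structure B], InVariety E A → InVariety E B →
    ∀ (a b : A) (c d : B),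
      (φ.Realize (M := A × B)
        (Sum.elim (fun i => (Z.zeroA A i, Z.oneA B i)) ![(a, c), (b, d)]) ↔ c = d)

/-- The formula ρ(z⃗, x, y) satisfies the condition (L): for all `A, B ∈ V`,
`A × B ⊨ ρ([0⃗,1⃗], (a,c), (b,d))` iff `a = b`. -/
def LeftFormulaWorks (E : Set (Identity L)) (Z : ZeroOneData L)
    (φ : L.Formula ((Fin Z.n) ⊕ (Fin 2))) : Prop :=
  ∀ (A B : Type u) [L.Structure A] [L.Structure B], InVariety E A → InVariety E B →
    ∀ (a b : A) (c d : B),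
      (φ.Realize (M := A × B)
        (Sum.elim (fun i => (Z.zeroA A i, Z.oneA B i)) ![(a, c), (b, d)]) ↔ a = b)

/-- `V` has right existentially definable factor congruences. -/
def HasRexDFC (E : Set (Identity L)) (Z : ZeroOneData L) : Prop :=
  HasBFC.{u} E ∧ ∃ φ : L.Formula ((Fin Z.n) ⊕ (Fin 2)),
    IsExistentialForm φ ∧ RightFormulaWorks.{u} E Z φ

/-- `V` has left existentially definable factor congruences. -/
def HasLexDFC (E : Set (Identity L)) (Z : ZeroOneData L) : Prop :=
  HasBFC.{u} E ∧ ∃ φ : L.Formula ((Fin Z.n) ⊕ (Fin 2)),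
    IsExistentialForm φ ∧ LeftFormulaWorks.{u} E Z φ

/-- `(θ, δ)` is the pair of complementary factor congruences associated with the
central element `e⃗`, i.e. `θ ⋄ δ`, `[e⃗,0⃗] ∈ θ` and `[e⃗,1⃗] ∈ δ`. -/
def PairFor (Z : ZeroOneData L) (A : Type u) [L.Structure A]
    (e : Fin Z.n → A) (θ δ : AlgCon L A) : Prop :=
  IsComplFC θ δ ∧ inCon θ e (Z.zeroA A) ∧ inCon δ e (Z.oneA A)

/-- `a⃗ = e⃗ ∧ f⃗` in the center: `[a⃗,0⃗] ∈ θ_{0,e} ∩ θ_{0,f}` and `[a⃗,1⃗] ∈ θ_{1,e} ∨ θ_{1,f}`. -/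
def IsMeetOf (Z : ZeroOneData L) (A : Type u) [L.Structure A]
    (e f a : Fin Z.n → A) : Prop :=
  ∃ θ₀e θ₁e θ₀f θ₁f : AlgCon L A, PairFor Z A e θ₀e θ₁e ∧ PairFor Z A f θ₀f θ₁f ∧
    inCon (θ₀e.inf θ₀f) a (Z.zeroA A) ∧ inCon (θ₁e.sup θ₁f) a (Z.oneA A)

/-- `a⃗ = e⃗ ∨ f⃗` in the center: `[a⃗,0⃗] ∈ θ_{0,e} ∨ θ_{0,f}` and `[a⃗,1⃗] ∈ θ_{1,e} ∩ θ_{1,f}`. -/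
def IsJoinOf (Z : ZeroOneData L) (A : Type u) [L.Structure A]
    (e f a : Fin Z.n → A) : Prop :=
  ∃ θ₀e θ₁e θ₀f θ₁f : AlgCon L A, PairFor Z A e θ₀e θ₁e ∧ PairFor Z A f θ₀f θ₁f ∧
    inCon (θ₀e.sup θ₀f) a (Z.zeroA A) ∧ inCon (θ₁e.inf θ₁f) a (Z.oneA A)

/-- `a⃗ = e⃗^c` in the center: `[a⃗,1⃗] ∈ θ_{0,e}` and `[a⃗,0⃗] ∈ θ_{1,e}`. -/
def IsComplOf (Z : ZeroOneData L) (A : Type u) [L.Structure A]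
    (e a : Fin Z.n → A) : Prop :=
  ∃ θ₀e θ₁e : AlgCon L A, PairFor Z A e θ₀e θ₁e ∧
    inCon θ₀e a (Z.oneA A) ∧ inCon θ₁e a (Z.zeroA A)

section Quotient

variable {A : Type u} [L.Structure A]

/-- The setoid underlying a congruence. -/
def AlgCon.setoid (c : AlgCon L A) : Setoid A :=
  ⟨c.r, ⟨c.refl, fun h => c.symm h, fun h1 h2 => c.trans h1 h2⟩⟩

/-- The quotient algebra `A/θ`. -/
def ConQuot (c : AlgCon L A) : Type u := Quotient c.setoid

/-- The class of `a` in `A/θ`. -/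
def ConQuot.mk (c : AlgCon L A) (a : A) : ConQuot c := Quotient.mk c.setoid a

noncomputable instance conQuotStructure (c : AlgCon L A) : L.Structure (ConQuot c) where
  funMap := fun f x => ConQuot.mk c (funMap f (fun i => (Quotient.out (α := A) (s := c.setoid) (x i))))
  RelMap := fun r x => ∃ as : Fin _ → A, (∀ i, ConQuot.mk c (as i) = x i) ∧ RelMap r as

theorem conQuot_funMap_mk (c : AlgCon L A) {m : ℕ} (f : L.Functions m) (as : Fin m → A) :
    funMap f (fun i => ConQuot.mk c (as i)) = ConQuot.mk c (funMap f as) := by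
  show ConQuot.mk c _ = ConQuot.mk c _
  apply Quotient.sound
  apply c.compat
  intro i
  exact Quotient.mk_out (s := c.setoid) (as i)

/-- The canonical quotient homomorphism `A → A/θ`. -/
def conQuotMk (c : AlgCon L A) : A →[L] ConQuot c where
  toFun := ConQuot.mk c
  map_fun' := fun f x => (conQuot_funMap_mk c f x).symm
  map_rel' := fun _r x h => ⟨x, fun _ => rfl, h⟩

end Quotient

end Paper



open Paper


namespace Paper

variable {L : FirstOrder.Language.{0, 0}} {A : Type u} [L.Structure A]

namespace AlgCon

theorem sup_r_left {c d : AlgCon L A} {a b : A} (h : c.r a b) : (c.sup d).r a b :=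
  fun t ht => ht a b (Or.inl h)

theorem sup_r_right {c d : AlgCon L A} {a b : A} (h : d.r a b) : (c.sup d).r a b :=
  fun t ht => ht a b (Or.inr h)

theorem sup_le {c d t : AlgCon L A} (h1 : ∀ a b, c.r a b → t.r a b)
    (h2 : ∀ a b, d.r a b → t.r a b) {a b : A} (h : (c.sup d).r a b) : t.r a b :=
  h t (fun x y hxy => hxy.elim (h1 x y) (h2 x y))

theorem sup_delta (c : AlgCon L A) : c.sup (delta L A) = c := by
  apply ext'
  intro a b
  constructor
  · exact fun h => sup_le (fun _ _ h => h) (fun _ _ h => by exact h ▸ c.refl _) h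
  · exact fun h => sup_r_left h

theorem delta_sup (c : AlgCon L A) : (delta L A).sup c = c := by
  apply ext'
  intro a b
  constructor
  · exact fun h => sup_le (fun _ _ h => by exact h ▸ c.refl _) (fun _ _ h => h) h
  · exact fun h => sup_r_right h

theorem inf_nabla (c : AlgCon L A) : c.inf (nabla L A) = c := by
  apply ext'
  intro a b
  exact ⟨fun h => h.1, fun h => ⟨h, trivial⟩⟩

end AlgCon

theorem isComplFC_symm {θ δ : AlgCon L A} (h : IsComplFC θ δ) : IsComplFC δ θ := by
  refine ⟨?_, ?_⟩
  · rw [← h.1]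
    apply AlgCon.ext'
    intro a b
    exact ⟨fun h => ⟨h.2, h.1⟩, fun h => ⟨h.2, h.1⟩⟩
  · intro a b
    obtain ⟨z, hz1, hz2⟩ := h.2 b a
    exact ⟨z, δ.symm hz2, θ.symm hz1⟩

theorem mem_FC_left {θ δ : AlgCon L A} (h : IsComplFC θ δ) : θ ∈ FC L A := ⟨δ, h⟩

theorem mem_FC_right {θ δ : AlgCon L A} (h : IsComplFC θ δ) : δ ∈ FC L A :=
  ⟨θ, isComplFC_symm h⟩

/-- The quotient algebra belongs to the variety. -/
theorem inVariety_conQuot {E : Set (Identity L)} (hA : InVariety E A) (c : AlgCon L A) :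
    InVariety E (ConQuot c) := by
  intro id hid v
  have hv : v = fun i => ConQuot.mk c (Quotient.out (s := c.setoid) (v i)) := by
    funext i; exact (Quotient.out_eq (v i)).symm
  rw [hv]
  have h1 := FirstOrder.Language.HomClass.realize_term (conQuotMk c)
    (t := id.lhs) (v := fun i => Quotient.out (s := c.setoid) (v i))
  have h2 := FirstOrder.Language.HomClass.realize_term (conQuotMk c)
    (t := id.rhs) (v := fun i => Quotient.out (s := c.setoid) (v i))
  have : ((conQuotMk c) ∘ fun i => Quotient.out (s := c.setoid) (v i)) =
      fun i => ConQuot.mk c (Quotient.out (s := c.setoid) (v i)) := rfl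
  rw [this] at h1 h2
  rw [h1, h2]
  show (conQuotMk c) _ = (conQuotMk c) _
  rw [hA id hid]

theorem conQuot_realize_closed (c : AlgCon L A) (t : L.Term Empty) :
    (t.realize Empty.elim : ConQuot c) = ConQuot.mk c (t.realize Empty.elim) := by
  have h1 := FirstOrder.Language.HomClass.realize_term (conQuotMk c)
    (t := t) (v := (Empty.elim : Empty → A))
  have : ((conQuotMk c) ∘ (Empty.elim : Empty → A)) = (Empty.elim : Empty → ConQuot c) := by
    funext x; exact x.elim
  rw [this] at h1
  exact h1

/-- If a congruence sends e to 0 and another sends e to 1, their join is ∇. -/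
theorem sup_eq_nabla {E : Set (Identity L)} {Z : ZeroOneData L}
    (hsep : ZeroOneData.Separates.{u} Z E) (hA : InVariety E A)
    {c d : AlgCon L A} {e : Fin Z.n → A}
    (h0 : inCon c e (Z.zeroA A)) (h1 : inCon d e (Z.oneA A)) :
    c.sup d = AlgCon.nabla L A := by
  set s := c.sup d with hs
  have hQ : InVariety E (ConQuot s) := inVariety_conQuot hA s
  have heq : ∀ i, Z.zeroA (ConQuot s) i = Z.oneA (ConQuot s) i := by
    intro i
    show ((Z.zero i).realize Empty.elim : ConQuot s) = (Z.one i).realize Empty.elim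
    rw [conQuot_realize_closed, conQuot_realize_closed]
    have k0 : s.r (e i) (Z.zeroA A i) := AlgCon.sup_r_left (h0 i)
    have k1 : s.r (e i) (Z.oneA A i) := AlgCon.sup_r_right (h1 i)
    exact (Quotient.sound (s.symm k0)).trans (Quotient.sound k1)
  have hsub : Subsingleton (ConQuot s) := hsep (ConQuot s) hQ heq
  apply AlgCon.ext'
  intro a b
  refine ⟨fun _ => trivial, fun _ => ?_⟩
  have : ConQuot.mk s a = ConQuot.mk s b := hsub.elim _ _
  exact Quotient.exact this

/-- Uniqueness of the pair of complementary factor congruences of a central element. -/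
theorem pairFor_unique {E : Set (Identity L)} {Z : ZeroOneData L}
    (hsep : ZeroOneData.Separates.{u} Z E) (hbfc : HasBFC.{u} E) (hA : InVariety E A)
    {e : Fin Z.n → A} {x x' t t' : AlgCon L A}
    (h1 : PairFor Z A e x x') (h2 : PairFor Z A e t t') : x = t ∧ x' = t' := by
  obtain ⟨_, _, _, _, hdist, _⟩ := hbfc A hA
  have hx : x ∈ FC L A := mem_FC_left h1.1
  have hx' : x' ∈ FC L A := mem_FC_right h1.1
  have ht : t ∈ FC L A := mem_FC_left h2.1
  have ht' : t' ∈ FC L A := mem_FC_right h2.1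
  have hxt' : x.sup t' = AlgCon.nabla L A := sup_eq_nabla hsep hA h1.2.1 h2.2.2
  have htx' : t.sup x' = AlgCon.nabla L A := sup_eq_nabla hsep hA h2.2.1 h1.2.2
  -- t ≤ x
  have d1 : t.inf (x.sup t') = (t.inf x).sup (t.inf t') := hdist t ht x hx t' ht'
  rw [hxt', AlgCon.inf_nabla, h2.1.1, AlgCon.sup_delta] at d1
  -- x ≤ t
  have d2 : x.inf (t.sup x') = (x.inf t).sup (x.inf x') := hdist x hx t ht x' hx'
  rw [htx', AlgCon.inf_nabla, h1.1.1, AlgCon.sup_delta] at d2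
  have hxteq : x = t := by
    apply AlgCon.ext'
    intro a b
    constructor
    · intro h
      have : (x.inf t).r a b := d2 ▸ h
      exact this.2
    · intro h
      have : (t.inf x).r a b := d1 ▸ h
      exact this.2
  -- x' ≤ t'
  have d3 : x'.inf (x.sup t') = (x'.inf x).sup (x'.inf t') := hdist x' hx' x hx t' ht'
  have hx'x : x'.inf x = AlgCon.delta L A := by
    rw [← h1.1.1]
    apply AlgCon.ext'
    intro a b
    exact ⟨fun h => ⟨h.2, h.1⟩, fun h => ⟨h.2, h.1⟩⟩
  rw [hxt', AlgCon.inf_nabla, hx'x, AlgCon.delta_sup] at d3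
  -- t' ≤ x'
  have d4 : t'.inf (t.sup x') = (t'.inf t).sup (t'.inf x') := hdist t' ht' t ht x' hx'
  have ht't : t'.inf t = AlgCon.delta L A := by
    rw [← h2.1.1]
    apply AlgCon.ext'
    intro a b
    exact ⟨fun h => ⟨h.2, h.1⟩, fun h => ⟨h.2, h.1⟩⟩
  rw [htx', AlgCon.inf_nabla, ht't, AlgCon.delta_sup] at d4
  refine ⟨hxteq, ?_⟩
  apply AlgCon.ext'
  intro a b
  constructor
  · intro h
    have : (x'.inf t').r a b := d3 ▸ h
    exact this.2
  · intro h
    have : (t'.inf x').r a b := d4 ▸ h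
    exact this.2

/-- Closed term realization in a product is componentwise. -/
theorem prod_realize_closed {A₁ A₂ : Type u} [L.Structure A₁] [L.Structure A₂]
    (t : L.Term Empty) :
    (t.realize Empty.elim : A₁ × A₂) =
      (t.realize Empty.elim, t.realize Empty.elim) := by
  induction t with
  | var v => exact v.elim
  | func g ts ih =>
    show (FirstOrder.Language.Structure.funMap g
      fun i => (FirstOrder.Language.Term.realize (M := A₁ × A₂) Empty.elim (ts i))) = _
    have hts : (fun i => (FirstOrder.Language.Term.realize (M := A₁ × A₂) Empty.elim (ts i))) =
        fun i => ((FirstOrder.Language.Term.realize (M := A₁) Empty.elim (ts i)),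
          (FirstOrder.Language.Term.realize (M := A₂) Empty.elim (ts i))) := by
      funext i; exact ih i
    rw [hts]
    rfl

/-- A central element has an associated pair of complementary factor congruences. -/
theorem exists_pairFor {E : Set (Identity L)} {Z : ZeroOneData L} {e : Fin Z.n → A}
    (he : IsCentral E Z A e) : ∃ x x' : AlgCon L A, PairFor Z A e x x' := by
  obtain ⟨w⟩ := he
  letI := w.s₁
  letI := w.s₂
  set τ := w.iso
  refine ⟨⟨fun a b => (τ a).1 = (τ b).1, fun _ => rfl, fun h => h.symm, fun h1 h2 => h1.trans h2,
      ?_⟩,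
    ⟨fun a b => (τ a).2 = (τ b).2, fun _ => rfl, fun h => h.symm, fun h1 h2 => h1.trans h2, ?_⟩,
    ⟨⟨?_, ?_⟩, ?_, ?_⟩⟩
  · intro m g x y h
    rw [τ.map_fun, τ.map_fun]
    show FirstOrder.Language.Structure.funMap g (fun i => (τ (x i)).1) = _
    congr 1
    funext i
    exact h i
  · intro m g x y h
    rw [τ.map_fun, τ.map_fun]
    show FirstOrder.Language.Structure.funMap g (fun i => (τ (x i)).2) = _
    congr 1
    funext i
    exact h i
  · apply AlgCon.ext'
    intro a b
    constructor
    · intro h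
      exact τ.injective (Prod.ext h.1 h.2)
    · intro h
      exact h ▸ ⟨rfl, rfl⟩
  · intro a b
    refine ⟨τ.symm ((τ a).1, (τ b).2), ?_, ?_⟩
    · show (τ a).1 = (τ (τ.symm _)).1
      rw [τ.apply_symm_apply]
    · show (τ (τ.symm _)).2 = (τ b).2
      rw [τ.apply_symm_apply]
  · intro i
    show (τ (e i)).1 = (τ (Z.zeroA A i)).1
    rw [w.he i]
    show Z.zeroA w.A₁ i = _
    have : τ (Z.zeroA A i) = ((Z.zero i).realize Empty.elim : w.A₁ × w.A₂) := by
      have h1 := FirstOrder.Language.HomClass.realize_term τ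
        (t := Z.zero i) (v := (Empty.elim : Empty → A))
      have : ((τ : A → w.A₁ × w.A₂) ∘ (Empty.elim : Empty → A)) =
          (Empty.elim : Empty → w.A₁ × w.A₂) := by funext x; exact x.elim
      rw [this] at h1
      exact h1.symm
    rw [this, prod_realize_closed]
    rfl
  · intro i
    show (τ (e i)).2 = (τ (Z.oneA A i)).2
    rw [w.he i]
    show Z.oneA w.A₂ i = _
    have : τ (Z.oneA A i) = ((Z.one i).realize Empty.elim : w.A₁ × w.A₂) := by
      have h1 := FirstOrder.Language.HomClass.realize_term τ
        (t := Z.one i) (v := (Empty.elim : Empty → A))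
      have : ((τ : A → w.A₁ × w.A₂) ∘ (Empty.elim : Empty → A)) =
          (Empty.elim : Empty → w.A₁ × w.A₂) := by funext x; exact x.elim
      rw [this] at h1
      exact h1.symm
    rw [this, prod_realize_closed]
    rfl

end Paper


/-- characterization of the infimum in the center:
`a⃗ = e⃗ ∧ f⃗` iff `[0⃗,a⃗] ∈ θ_{0,e}` and `[a⃗,f⃗] ∈ θ_{1,e}`. -/
theorem statement9 (L : FirstOrder.Language.{0, 0}) [L.IsAlgebraic]
    [Finite (Σ n, L.Functions n)]
    (E : Set (Identity L)) (Z : ZeroOneData L)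
    (hsep : ZeroOneData.Separates.{u} Z E) (hbfc : HasBFC.{u} E)
    (A : Type u) [L.Structure A] (hA : InVariety E A)
    (e f : Fin Z.n → A) (he : IsCentral E Z A e) (hf : IsCentral E Z A f)
    (a : Fin Z.n → A) :
    IsMeetOf Z A e f a ↔
      ∀ θ₀e θ₁e : AlgCon L A, PairFor Z A e θ₀e θ₁e →
        inCon θ₀e (Z.zeroA A) a ∧ inCon θ₁e a f := by
  constructor
  · rintro ⟨x, x', y, y', hpe, hpf, h0, h1⟩ θ₀ θ₁ hp
    obtain ⟨hx, hx'⟩ := pairFor_unique hsep hbfc hA hp hpe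
    obtain ⟨_, _, _, _, hdist, _⟩ := hbfc A hA
    constructor
    · intro i
      rw [hx]
      exact x.symm (h0 i).1
    · intro i
      rw [hx']
      have hay : y.r (a i) (f i) := y.trans (h0 i).2 (y.symm (hpf.2.1 i))
      have hafs : (x'.sup y').r (a i) (f i) :=
        (x'.sup y').trans (h1 i) ((x'.sup y').symm (AlgCon.sup_r_right (hpf.2.2 i)))
      have d : y.inf (x'.sup y') = (y.inf x').sup (y.inf y') :=
        hdist y (mem_FC_left hpf.1) x' (mem_FC_right hpe.1) y' (mem_FC_right hpf.1)
      have hyy' : y.inf y' = AlgCon.delta L A := hpf.1.1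
      rw [hyy', AlgCon.sup_delta] at d
      have hh : (y.inf x').r (a i) (f i) :=
        d ▸ (⟨hay, hafs⟩ : (y.inf (x'.sup y')).r (a i) (f i))
      exact hh.2
  · intro hR
    obtain ⟨x, x', hpe⟩ := exists_pairFor he
    obtain ⟨y, y', hpf⟩ := exists_pairFor hf
    obtain ⟨h0a, haf⟩ := hR x x' hpe
    obtain ⟨_, _, _, _, hdist, _⟩ := hbfc A hA
    refine ⟨x, x', y, y', hpe, hpf, ?_, ?_⟩
    · intro i
      have hax : x.r (a i) (Z.zeroA A i) := x.symm (h0a i)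
      have hh1 : (x'.sup y).r (a i) (Z.zeroA A i) :=
        (x'.sup y).trans (AlgCon.sup_r_left (haf i)) (AlgCon.sup_r_right (hpf.2.1 i))
      have d : x.inf (x'.sup y) = (x.inf x').sup (x.inf y) :=
        hdist x (mem_FC_left hpe.1) x' (mem_FC_right hpe.1) y (mem_FC_left hpf.1)
      have hxx' : x.inf x' = AlgCon.delta L A := hpe.1.1
      rw [hxx', AlgCon.delta_sup] at d
      have hh : (x.inf y).r (a i) (Z.zeroA A i) :=
        d ▸ (⟨hax, hh1⟩ : (x.inf (x'.sup y)).r (a i) (Z.zeroA A i))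
      exact ⟨hax, hh.2⟩
    · intro i
      exact (x'.sup y').trans (AlgCon.sup_r_left (haf i))
        (AlgCon.sup_r_right (hpf.2.2 i))
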